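/- arXiv:2509.26194 — 2 statements merged into one kernel-verified Lean document; each statement's English description precedes it below -/
import Mathlib

section
/- Let S ⊆ T ⊆ [n−1]. The set of permutations w ∈ S_n with S ⊆ Des(w) ⊆ T equals the left weak Bruhat interval [w₀(S), w₁(T)]_L, where w₀(S) is the longest element of the parabolic subgroup generated by {s_i : i ∈ S} and w₁(T) is the longest element among minimal length left coset representatives for the parabolic subgroup generated by {s_i : i ∉ T}. -/
open Equiv

/-- The Coxeter length of a permutation of `Fin n`: its number of inversions. -/
def permLen (n : ℕ) (w : Perm (Fin n)) : ℕ :=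
  (Finset.univ.filter (fun p : Fin n × Fin n => p.1 < p.2 ∧ w p.2 < w p.1)).card

/-- The simple transposition `s_i` (0-indexed, swapping positions `i` and `i+1`). -/
def simpleT (n : ℕ) (i : ℕ) (h : i + 1 < n) : Perm (Fin n) :=
  Equiv.swap ⟨i, Nat.lt_of_succ_lt h⟩ ⟨i + 1, h⟩

/-- The (right) descent set of a permutation. -/
def descentSet (n : ℕ) (w : Perm (Fin n)) : Set ℕ :=
  {i | ∃ h : i + 1 < n, permLen n (w * simpleT n i h) < permLen n w}

/-- The parabolic subgroup generated by the simple transpositions `s_i`, `i ∈ S`. -/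
def parabolic (n : ℕ) (S : Set ℕ) : Subgroup (Perm (Fin n)) :=
  Subgroup.closure {g | ∃ i ∈ S, ∃ h : i + 1 < n, g = simpleT n i h}

/-- Left weak Bruhat order: `u ≤_L w` iff `ℓ(w) = ℓ(u) + ℓ(w u⁻¹)`. -/
def leftWeakLe (n : ℕ) (u w : Perm (Fin n)) : Prop :=
  permLen n w = permLen n u + permLen n (w * u⁻¹)

/-!
Everything is read off inversion sets. The identity
`ℓ(u) + ℓ(w u⁻¹) = ℓ(w) + 2 · #{inversions of u not inverted by w}`, a triangle identity for the
Kendall tau distance, shows that `u ≤_L w` iff `Inv(u) ⊆ Inv(w)`.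

Call positions joined by simple transpositions `s_k`, `k ∈ S`, an `S`-block. The parabolic subgroup
of `S` preserves `S`-blocks, and its longest element has every `k ∈ S` as a descent, so
`Inv(w₀(S))` consists of the pairs inside one `S`-block. A permutation with `Des(w) ⊆ T` is
increasing on every `Tᶜ`-block, so its inversions are pairs from different `Tᶜ`-blocks; the
permutation reversing the order of the `Tᶜ`-blocks has all of them, hence so does the longest
`w₁(T)`. Since `S ⊆ Des(w)` says that `w` is decreasing on every `S`-block, both sides of the
theorem become the same conditions on `Inv(w)`.
-/
open Finset Function

section DiscordantPairs

variable {α β : Type*} [Fintype α] [LinearOrder β]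

/-- `#(discordantPairs f g)` is the Kendall tau distance between `f` and `g`. -/
def discordantPairs (f g : α → β) : Finset (α × α) :=
  {p | f p.1 < f p.2 ∧ g p.2 < g p.1}

@[simp]
lemma mem_discordantPairs {f g : α → β} {p : α × α} :
    p ∈ discordantPairs f g ↔ f p.1 < f p.2 ∧ g p.2 < g p.1 := by
  simp [discordantPairs]

lemma card_discordantPairs_comp (f g : α → β) (σ : α ≃ α) :
    #(discordantPairs (f ∘ σ) (g ∘ σ)) = #(discordantPairs f g) :=
  card_equiv (σ.prodCongr σ) (by simp)

lemma card_discordantPairs_add_card_discordantPairs {f g h : α → β}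
    (hf : Injective f) (hg : Injective g) (hh : Injective h) :
    #(discordantPairs f g) + #(discordantPairs g h) =
      #(discordantPairs f h) +
        2 * #{p : α × α | f p.1 < f p.2 ∧ g p.2 < g p.1 ∧ h p.1 < h p.2} := by
  have hswap : #{p : α × α | f p.1 < f p.2 ∧ g p.2 < g p.1 ∧ h p.1 < h p.2} =
      #{p : α × α | f p.2 < f p.1 ∧ g p.1 < g p.2 ∧ h p.2 < h p.1} :=
    card_equiv (Equiv.prodComm α α) (by simp)
  rw [two_mul, ← add_assoc]
  nth_rw 2 [hswap]
  simp only [discordantPairs, card_filter, ← sum_add_distrib]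
  refine sum_congr rfl fun ⟨a, b⟩ _ => ?_
  by_cases hab : a = b
  · simp [hab]
  rcases (hf.ne hab).lt_or_gt with h1 | h1 <;> rcases (hg.ne hab).lt_or_gt with h2 | h2 <;>
    rcases (hh.ne hab).lt_or_gt with h3 | h3 <;> simp [h1, h2, h3, h1.not_gt, h2.not_gt, h3.not_gt]

end DiscordantPairs

section WeakOrder

variable {n : ℕ}

lemma permLen_eq_card (w : Perm (Fin n)) : permLen n w = #(discordantPairs id w) := rfl

lemma permLen_add_permLen_mul_inv (u w : Perm (Fin n)) :
    permLen n u + permLen n (w * u⁻¹) =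
      permLen n w + 2 * #{p : Fin n × Fin n | p.1 < p.2 ∧ u p.2 < u p.1 ∧ w p.1 < w p.2} := by
  have hcomp : permLen n (w * u⁻¹) = #(discordantPairs u w) := by
    rw [permLen_eq_card, ← card_discordantPairs_comp id (⇑(w * u⁻¹)) u]
    congr 2
    ext; simp
  rw [hcomp, permLen_eq_card, permLen_eq_card]
  exact card_discordantPairs_add_card_discordantPairs injective_id u.injective w.injective

lemma Equiv.Perm.lt_iff_not_lt {α : Type*} [LinearOrder α] {w : Perm α} {i j : α} (hij : i ≠ j) :
    w i < w j ↔ ¬ w j < w i :=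
  (not_lt.trans (w.injective.ne hij).le_iff_lt).symm

lemma leftWeakLe_iff {u w : Perm (Fin n)} :
    leftWeakLe n u w ↔ ∀ ⦃i j : Fin n⦄, i < j → u j < u i → w j < w i := by
  have key := permLen_add_permLen_mul_inv u w
  have hzero : leftWeakLe n u w ↔
      #{p : Fin n × Fin n | p.1 < p.2 ∧ u p.2 < u p.1 ∧ w p.1 < w p.2} = 0 := by
    rw [leftWeakLe]
    omega
  rw [hzero, card_eq_zero, filter_eq_empty_iff]
  simp only [mem_univ, true_implies, Prod.forall, not_and]
  exact forall₂_congr fun i j => forall₂_congr fun hij _ =>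
    (Equiv.Perm.lt_iff_not_lt hij.ne').symm

end WeakOrder

section Descents

variable {n : ℕ}

lemma val_simpleT_apply {i : ℕ} (h : i + 1 < n) (x : Fin n) :
    (simpleT n i h x : ℕ) = if (x : ℕ) = i then i + 1 else if (x : ℕ) = i + 1 then i else x := by
  simp only [simpleT, swap_apply_def]
  split_ifs <;> simp_all [Fin.ext_iff]

lemma simpleT_lt_simpleT_iff {i : ℕ} (h : i + 1 < n) {a b : Fin n} (hab : a < b) :
    simpleT n i h b < simpleT n i h a ↔ (a : ℕ) = i ∧ (b : ℕ) = i + 1 := by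
  rw [Fin.lt_def, val_simpleT_apply, val_simpleT_apply]
  rw [Fin.lt_def] at hab
  split_ifs <;> omega

lemma leftWeakLe_simpleT_iff {i : ℕ} (h : i + 1 < n) {w : Perm (Fin n)} :
    leftWeakLe n (simpleT n i h) w ↔ w ⟨i + 1, h⟩ < w ⟨i, by omega⟩ := by
  rw [leftWeakLe_iff]
  constructor
  · exact fun hw => hw (Fin.mk_lt_mk.2 i.lt_succ_self) ((simpleT_lt_simpleT_iff h
      (Fin.mk_lt_mk.2 i.lt_succ_self)).2 ⟨rfl, rfl⟩)
  · intro hw a b hab hs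
    obtain ⟨ha, hb⟩ := (simpleT_lt_simpleT_iff h hab).1 hs
    obtain ⟨a, _⟩ := a
    obtain ⟨b, _⟩ := b
    subst ha hb
    exact hw

lemma permLen_simpleT {i : ℕ} (h : i + 1 < n) : permLen n (simpleT n i h) = 1 := by
  rw [permLen_eq_card, card_eq_one]
  refine ⟨(⟨i, by omega⟩, ⟨i + 1, h⟩), ext fun ⟨a, b⟩ => ?_⟩
  simp only [mem_discordantPairs, id, mem_singleton, Prod.mk.injEq, Fin.ext_iff]
  constructor
  · exact fun ⟨hab, hs⟩ => (simpleT_lt_simpleT_iff h hab).1 hs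
  · rintro ⟨ha, hb⟩
    have hab : a < b := by rw [Fin.lt_def]; omega
    exact ⟨hab, (simpleT_lt_simpleT_iff h hab).2 ⟨ha, hb⟩⟩

lemma permLen_mul_simpleT_of_lt {i : ℕ} (h : i + 1 < n) {w : Perm (Fin n)}
    (hw : w ⟨i, by omega⟩ < w ⟨i + 1, h⟩) : permLen n (w * simpleT n i h) = permLen n w + 1 := by
  have hle : leftWeakLe n (simpleT n i h) (w * simpleT n i h) := by
    rw [leftWeakLe_simpleT_iff]
    simpa [simpleT] using hw
  rw [hle, mul_inv_cancel_right, permLen_simpleT, add_comm]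

lemma mem_descentSet_iff {i : ℕ} (h : i + 1 < n) {w : Perm (Fin n)} :
    i ∈ descentSet n w ↔ w ⟨i + 1, h⟩ < w ⟨i, by omega⟩ := by
  constructor
  · rintro ⟨_, hdes⟩
    by_contra hasc
    rw [← Equiv.Perm.lt_iff_not_lt (by simp)] at hasc
    rw [permLen_mul_simpleT_of_lt h hasc] at hdes
    omega
  · intro hw
    refine ⟨h, ?_⟩
    have hle := (leftWeakLe_simpleT_iff h).2 hw
    rw [leftWeakLe, permLen_simpleT, simpleT, swap_inv] at hle
    rw [simpleT]
    omega

end Descents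

section Blocks

/-- Positions `a` and `b` are joined by the simple transpositions `s_k`, `k ∈ S`, i.e. they lie
in the same orbit of the parabolic subgroup generated by `S`. -/
def SameBlock (S : Set ℕ) (a b : ℕ) : Prop :=
  ∀ k, min a b ≤ k → k < max a b → k ∈ S

variable {S : Set ℕ} {a b c k : ℕ}

lemma SameBlock.symm (h : SameBlock S a b) : SameBlock S b a :=
  fun k h1 h2 => h k (by omega) (by omega)

lemma SameBlock.trans (hab : SameBlock S a b) (hbc : SameBlock S b c) : SameBlock S a c := by
  intro k h1 h2
  by_cases hk : min a b ≤ k ∧ k < max a b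
  · exact hab k hk.1 hk.2
  · exact hbc k (by omega) (by omega)

lemma sameBlock_of_le (hab : a ≤ b) : SameBlock S a b ↔ ∀ k, a ≤ k → k < b → k ∈ S := by
  rw [SameBlock, min_eq_left hab, max_eq_right hab]

lemma sameBlock_succ : SameBlock S k (k + 1) ↔ k ∈ S := by
  rw [sameBlock_of_le k.le_succ]
  exact ⟨fun h => h k le_rfl k.lt_succ_self, fun h j h1 h2 => by rwa [show j = k by omega]⟩

lemma SameBlock.le_iff_le (h : SameBlock S a b) (hk : k ∉ S) : a ≤ k ↔ b ≤ k := by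
  constructor <;> intro h' <;> by_contra h'' <;> exact hk (h k (by omega) (by omega))

variable {n : ℕ}

lemma lt_of_sameBlock {α : Type*} [Preorder α] {f : Fin n → α}
    (hf : ∀ k (hk : k + 1 < n), k ∈ S → f ⟨k, by omega⟩ < f ⟨k + 1, hk⟩)
    {i j : Fin n} (hij : i < j) (hS : SameBlock S i j) : f i < f j := by
  obtain ⟨i, hi⟩ := i
  obtain ⟨j, hj⟩ := j
  rw [Fin.mk_lt_mk] at hij
  rw [sameBlock_of_le hij.le] at hS
  induction j, hij using Nat.le_induction with
  | base => exact hf i hj (hS i le_rfl i.lt_succ_self)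
  | succ j hij ih =>
    exact (ih (by omega) fun k h1 h2 => hS k h1 (by omega)).trans
      (hf j hj (hS j (by omega) j.lt_succ_self))

lemma sameBlock_apply_of_mem_parabolic {g : Perm (Fin n)} (hg : g ∈ parabolic n S) (x : Fin n) :
    SameBlock S x (g x) := by
  induction hg using Subgroup.closure_induction generalizing x with
  | mem g hg =>
    obtain ⟨i, hi, h, rfl⟩ := hg
    intro k h1 h2
    have := val_simpleT_apply h x
    split_ifs at this <;> first | omega | rwa [show k = i by omega]
  | one => exact fun k h1 h2 => by simp at h1 h2; omega
  | mul g g' _ _ ih ih' => exact (ih' x).trans (ih (g' x))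
  | inv g _ ih => simpa using (ih (g⁻¹ x)).symm

end Blocks

section LongestElements

variable {n : ℕ} {S T : Set ℕ} {w : Perm (Fin n)}

lemma subset_descentSet_iff (hS : ∀ i ∈ S, i + 1 < n) :
    S ⊆ descentSet n w ↔ ∀ ⦃i j : Fin n⦄, i < j → SameBlock S i j → w j < w i := by
  constructor
  · exact fun hdes i j => lt_of_sameBlock (f := OrderDual.toDual ∘ w)
      fun k hk hkS => (mem_descentSet_iff hk).1 (hdes hkS)
  · intro hw i hi
    have h := hS i hi
    exact (mem_descentSet_iff h).2 (hw (Fin.mk_lt_mk.2 i.lt_succ_self) (sameBlock_succ.2 hi))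

lemma descentSet_subset_iff :
    descentSet n w ⊆ T ↔ ∀ ⦃i j : Fin n⦄, i < j → SameBlock Tᶜ i j → w i < w j := by
  constructor
  · refine fun hdes i j => lt_of_sameBlock fun k hk hkT => ?_
    rw [Equiv.Perm.lt_iff_not_lt (by simp), ← mem_descentSet_iff hk]
    exact fun hk' => hkT (hdes hk')
  · rintro hw i ⟨h, hdes⟩
    by_contra hiT
    have hlt := @hw ⟨i, by omega⟩ ⟨i + 1, h⟩ (Fin.mk_lt_mk.2 i.lt_succ_self) (sameBlock_succ.2 hiT)
    exact (Equiv.Perm.lt_iff_not_lt (by simp)).1 hlt ((mem_descentSet_iff h).1 ⟨h, hdes⟩)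

lemma exists_longest_mem_parabolic (S : Set ℕ) :
    ∃ w ∈ parabolic n S, ∀ x ∈ parabolic n S, permLen n x ≤ permLen n w := by
  classical
  obtain ⟨w, hw, hmax⟩ := exists_max_image {g | g ∈ parabolic n S} (permLen n)
    ⟨1, by simp [(parabolic n S).one_mem]⟩
  exact ⟨w, by simpa using hw, fun x hx => hmax x (by simpa using hx)⟩

lemma lt_iff_sameBlock_of_longest (hw : w ∈ parabolic n S)
    (hmax : ∀ x ∈ parabolic n S, permLen n x ≤ permLen n w) {i j : Fin n} (hij : i < j) :
    w j < w i ↔ SameBlock S i j := by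
  constructor
  · rw [sameBlock_of_le hij.le]
    intro hinv k h1 h2
    by_contra hk
    have hi := ((sameBlock_apply_of_mem_parabolic hw i).le_iff_le hk).1 h1
    have hj := ((sameBlock_apply_of_mem_parabolic hw j).le_iff_le hk).not.1 (by omega)
    exact hj (Fin.le_def.1 hinv.le |>.trans hi)
  · refine lt_of_sameBlock (f := OrderDual.toDual ∘ w) (fun k hk hkS => ?_) hij
    by_contra hasc
    rw [comp_apply, comp_apply, OrderDual.toDual_lt_toDual,
      ← Equiv.Perm.lt_iff_not_lt (by simp)] at hasc
    have hlen := hmax _ (mul_mem hw (Subgroup.subset_closure ⟨k, hkS, hk, rfl⟩))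
    rw [permLen_mul_simpleT_of_lt hk hasc] at hlen
    omega

/-- The witness reverses the order of the `S`-blocks, keeping each block increasing. -/
lemma exists_lt_iff_not_sameBlock (S : Set ℕ) :
    ∃ z : Perm (Fin n), ∀ ⦃i j : Fin n⦄, i < j → (z j < z i ↔ ¬ SameBlock S i j) := by
  obtain ⟨r, hr, hmax⟩ := exists_longest_mem_parabolic (n := n) S
  refine ⟨Fin.revPerm * r, fun i j hij => ?_⟩
  simp only [Perm.mul_apply, Fin.revPerm_apply, Fin.rev_lt_rev]
  rw [Equiv.Perm.lt_iff_not_lt hij.ne, lt_iff_sameBlock_of_longest hr hmax hij]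

lemma lt_iff_not_sameBlock_of_longest (hw : descentSet n w ⊆ T)
    (hmax : ∀ z : Perm (Fin n), descentSet n z ⊆ T → permLen n z ≤ permLen n w)
    {i j : Fin n} (hij : i < j) : w j < w i ↔ ¬ SameBlock Tᶜ i j := by
  obtain ⟨z, hz⟩ := exists_lt_iff_not_sameBlock (n := n) Tᶜ
  have hzT : descentSet n z ⊆ T := descentSet_subset_iff.2 fun i j hij hb => by
    rw [Equiv.Perm.lt_iff_not_lt hij.ne, hz hij, not_not]
    exact hb
  have hsub : discordantPairs id w ⊆ discordantPairs id z := fun ⟨a, b⟩ hab => by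
    rw [mem_discordantPairs] at hab ⊢
    refine ⟨hab.1, (hz hab.1).2 fun hb => ?_⟩
    exact (Equiv.Perm.lt_iff_not_lt hab.1.ne).1 (descentSet_subset_iff.1 hw hab.1 hb) hab.2
  have heq := eq_of_subset_of_card_le hsub (hmax z hzT)
  rw [← hz hij]
  simpa [hij] using congrArg ((i, j) ∈ ·) heq

end LongestElements

/-- For `S ⊆ T ⊆ [n−1]`, the set `{w : S ⊆ Des(w) ⊆ T}` is exactly the left weak
Bruhat interval `[w₀(S), w₁(T)]_L`, where `w₀(S)` is the longest element of the
parabolic subgroup generated by `S` and `w₁(T)` is the longest element among the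
minimal length coset representatives `{z : Des(z) ⊆ T}`. -/
theorem descent_class_eq_weak_interval (n : ℕ) (S T : Set ℕ)
    (hS : S ⊆ T) (hT : ∀ i ∈ T, i + 1 < n)
    (w0 : Perm (Fin n)) (hw0 : w0 ∈ parabolic n S)
    (hw0max : ∀ x ∈ parabolic n S, permLen n x ≤ permLen n w0)
    (w1 : Perm (Fin n)) (hw1 : descentSet n w1 ⊆ T)
    (hw1max : ∀ z : Perm (Fin n), descentSet n z ⊆ T → permLen n z ≤ permLen n w1) :
    ∀ w : Perm (Fin n),
      (S ⊆ descentSet n w ∧ descentSet n w ⊆ T) ↔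
      (leftWeakLe n w0 w ∧ leftWeakLe n w w1) := by
  intro w
  rw [subset_descentSet_iff fun i hi => hT i (hS hi), descentSet_subset_iff, leftWeakLe_iff,
    leftWeakLe_iff]
  refine and_congr (forall₂_congr fun i j => forall_congr' fun hij => ?_)
    (forall₂_congr fun i j => forall_congr' fun hij => ?_)
  · rw [lt_iff_sameBlock_of_longest hw0 hw0max hij]
  · rw [lt_iff_not_sameBlock_of_longest hw1 hw1max hij, Equiv.Perm.lt_iff_not_lt hij.ne,
      imp_not_comm]
end

section
/- Let H be a finite-dimensional Frobenius algebra over ℂ with Frobenius functional ε and Nakayama automorphism φ (so ε(ab) = ε(b φ(a)) for all a,b ∈ H). Let e and f be idempotents in H. Then the map Θ : e H φ(f) → (f H e)*, defined by Θ(eh φ(f))(x) = ε(xh) for x ∈ f H e, is a well-defined isomorphism of left eHe-modules, where (fHe)* carries the left eHe-action ((y·δ)(x) = δ(xy)). -/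
/-!
`Θ` is the pairing `(x, u) ↦ ε(x u)` restricted to `fHe × eHφ(f)`, read as a map into the dual.
The Nakayama relation gives `ε(f a) = ε(a φ(f))`, so compressing either argument of the pairing
by the corner idempotents does not change its value; nondegeneracy of `ε` on `H` therefore passes
to both sides of the restricted pairing, and a pairing of finite-dimensional spaces that is
nondegenerate on both sides is perfect. The `eHe`-linearity is associativity.
-/

/-- The `ℂ`-subspace `aHb = {a·h·b : h ∈ H}` of an algebra `H`. -/
noncomputable def sandwichSubspace {H : Type} [Ring H] [Algebra ℂ H] (a b : H) :
    Submodule ℂ H :=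
  LinearMap.range ((LinearMap.mulRight ℂ b).comp (LinearMap.mulLeft ℂ a))

namespace sandwichSubspace

variable {H : Type} [Ring H] [Algebra ℂ H] {a b x : H}

theorem mul_mul_mem (a h b : H) : a * h * b ∈ sandwichSubspace a b :=
  ⟨h, rfl⟩

theorem mul_left_eq (ha : IsIdempotentElem a) (hx : x ∈ sandwichSubspace a b) : a * x = x := by
  obtain ⟨h, rfl⟩ : ∃ h, a * h * b = x := hx
  rw [← mul_assoc, ← mul_assoc, ha.eq]

theorem mul_right_eq (hb : IsIdempotentElem b) (hx : x ∈ sandwichSubspace a b) : x * b = x := by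
  obtain ⟨h, rfl⟩ : ∃ h, a * h * b = x := hx
  rw [mul_assoc, hb.eq]

end sandwichSubspace

section Frobenius

variable {H : Type} [Ring H] [Algebra ℂ H] {ε : H →ₗ[ℂ] ℂ} {φ : H ≃ₐ[ℂ] H}

variable (ε) in
noncomputable def frobeniusPairing (V U : Submodule ℂ H) : V →ₗ[ℂ] U →ₗ[ℂ] ℂ :=
  ((LinearMap.mul ℂ H).compr₂ ε).compl₁₂ V.subtype U.subtype

@[simp]
theorem frobeniusPairing_apply (V U : Submodule ℂ H) (x : V) (u : U) :
    frobeniusPairing ε V U x u = ε (x * u) :=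
  rfl

theorem eq_zero_of_forall_apply_mul_eq_zero (hnd : ∀ a : H, (∀ b : H, ε (a * b) = 0) → a = 0)
    (hNak : ∀ a b : H, ε (a * b) = ε (b * φ a)) {u : H} (hu : ∀ c : H, ε (c * u) = 0) :
    u = 0 :=
  hnd u fun b => by rw [← φ.apply_symm_apply b, ← hNak, hu]

theorem apply_corner_mul_eq (hNak : ∀ a b : H, ε (a * b) = ε (b * φ a)) {e f u : H}
    (he : IsIdempotentElem e) (hf : IsIdempotentElem f) (hu : u ∈ sandwichSubspace e (φ f))
    (c : H) : ε (f * c * e * u) = ε (c * u) := by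
  rw [mul_assoc _ e, sandwichSubspace.mul_left_eq he hu, mul_assoc, hNak, mul_assoc,
    sandwichSubspace.mul_right_eq (hf.map φ) hu]

theorem apply_mul_corner_eq (hNak : ∀ a b : H, ε (a * b) = ε (b * φ a)) {e f x : H}
    (he : IsIdempotentElem e) (hf : IsIdempotentElem f) (hx : x ∈ sandwichSubspace f e)
    (b : H) : ε (x * (e * b * φ f)) = ε (x * b) := by
  rw [← mul_assoc, ← mul_assoc, sandwichSubspace.mul_right_eq he hx, ← hNak, ← mul_assoc,
    sandwichSubspace.mul_left_eq hf hx]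

theorem frobeniusPairing_injective (hnd : ∀ a : H, (∀ b : H, ε (a * b) = 0) → a = 0)
    (hNak : ∀ a b : H, ε (a * b) = ε (b * φ a)) {e f : H}
    (he : IsIdempotentElem e) (hf : IsIdempotentElem f) :
    Function.Injective (frobeniusPairing ε (sandwichSubspace f e) (sandwichSubspace e (φ f))) := by
  refine (injective_iff_map_eq_zero _).2 fun x hx => Subtype.ext <| hnd x fun b => ?_
  rw [← apply_mul_corner_eq hNak he hf x.2]
  exact LinearMap.congr_fun hx ⟨_, sandwichSubspace.mul_mul_mem e b (φ f)⟩

theorem frobeniusPairing_flip_injective (hnd : ∀ a : H, (∀ b : H, ε (a * b) = 0) → a = 0)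
    (hNak : ∀ a b : H, ε (a * b) = ε (b * φ a)) {e f : H}
    (he : IsIdempotentElem e) (hf : IsIdempotentElem f) :
    Function.Injective
      (frobeniusPairing ε (sandwichSubspace f e) (sandwichSubspace e (φ f))).flip := by
  refine (injective_iff_map_eq_zero _).2 fun u hu =>
    Subtype.ext <| eq_zero_of_forall_apply_mul_eq_zero hnd hNak fun c => ?_
  rw [← apply_corner_mul_eq hNak he hf u.2]
  exact LinearMap.congr_fun hu ⟨_, sandwichSubspace.mul_mul_mem f c e⟩

end Frobenius

/-- Let `H` be a finite-dimensional Frobenius `ℂ`-algebra with Frobenius functional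
`ε` and Nakayama automorphism `φ` (so `ε(ab) = ε(b·φ(a))`), and let `e`, `f` be
idempotents.  Then `Θ : eHφ(f) → (fHe)*`, `Θ(e·h·φ(f))(x) = ε(x·h)`, is a
well-defined bijective map of left `eHe`-modules, where `(fHe)*` carries the
action `(y·δ)(x) = δ(x·y)`. -/
theorem frobenius_corner_duality
    (H : Type) [Ring H] [Algebra ℂ H] [FiniteDimensional ℂ H]
    (ε : H →ₗ[ℂ] ℂ) (hnd : ∀ a : H, (∀ b : H, ε (a * b) = 0) → a = 0)
    (φ : H ≃ₐ[ℂ] H) (hNak : ∀ a b : H, ε (a * b) = ε (b * φ a))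
    (e f : H) (he : e * e = e) (hf : f * f = f) :
    ∃ Θ : ↥(sandwichSubspace e (φ f)) →ₗ[ℂ] Module.Dual ℂ ↥(sandwichSubspace f e),
      (∀ (h : H) (u : ↥(sandwichSubspace e (φ f))), (u : H) = e * h * φ f →
        ∀ x : ↥(sandwichSubspace f e), Θ u x = ε ((x : H) * h)) ∧
      Function.Bijective Θ ∧
      (∀ y : H, e * y * e = y →
        ∀ u v : ↥(sandwichSubspace e (φ f)), (v : H) = y * (u : H) →
          ∀ x x' : ↥(sandwichSubspace f e), (x' : H) = (x : H) * y →
            Θ v x = Θ u x') := by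
  refine ⟨(frobeniusPairing ε (sandwichSubspace f e) (sandwichSubspace e (φ f))).flip,
    ?_, ⟨frobeniusPairing_flip_injective hnd hNak he hf, ?_⟩, ?_⟩
  · intro h u hu x
    rw [LinearMap.flip_apply, frobeniusPairing_apply, hu, apply_mul_corner_eq hNak he hf x.2]
  · exact LinearMap.flip_surjective_iff₁.2 (frobeniusPairing_injective hnd hNak he hf)
  · intro y _ u v hv x x' hx'
    simp only [LinearMap.flip_apply, frobeniusPairing_apply, hv, hx', mul_assoc]
end
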